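/- For a vertically mapped wedge, each quadrilateral face is planar with constant unit normal, and its surface Jacobian J_f is constant in the extruded coordinate t and varies at most linearly along the horizontal face coordinate. -/
import Mathlib


noncomputable section

/-- Vertex basis functions of the reference wedge. -/
def wv : Fin 6 → ℝ → ℝ → ℝ → ℝ
  | 0 => fun r s t => (1 - r - s) * (1 - t)
  | 1 => fun r s t => r * (1 - t)
  | 2 => fun r s t => s * (1 - t)
  | 3 => fun r s t => (1 - r - s) * t
  | 4 => fun r s t => r * t
  | 5 => fun r s t => s * t

/-- The `i`-th coordinate of the trilinear vertex mapping `Φ` with vertices `ν`. -/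
def wedgeMap (ν : Fin 6 → Fin 3 → ℝ) (i : Fin 3) (r s t : ℝ) : ℝ :=
  ∑ k : Fin 6, ν k i * wv k r s t

/-- A wedge is vertically mapped if the x and y coordinates agree within each
vertex pair (ν₁,ν₄), (ν₂,ν₅), (ν₃,ν₆). -/
def VerticallyMapped (ν : Fin 6 → Fin 3 → ℝ) : Prop :=
  (ν 0 0 = ν 3 0 ∧ ν 0 1 = ν 3 1) ∧
  (ν 1 0 = ν 4 0 ∧ ν 1 1 = ν 4 1) ∧
  (ν 2 0 = ν 5 0 ∧ ν 2 1 = ν 5 1)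

/-- partial derivative in the first (r) variable -/
def pdr (f : ℝ → ℝ → ℝ → ℝ) (r s t : ℝ) : ℝ := deriv (fun x => f x s t) r
/-- partial derivative in the second (s) variable -/
def pds (f : ℝ → ℝ → ℝ → ℝ) (r s t : ℝ) : ℝ := deriv (fun x => f r x t) s
/-- partial derivative in the third (t) variable -/
def pdt (f : ℝ → ℝ → ℝ → ℝ) (r s t : ℝ) : ℝ := deriv (fun x => f r s x) t

/-- Jacobian determinant of the wedge mapping. -/
def wedgeJac (ν : Fin 6 → Fin 3 → ℝ) (r s t : ℝ) : ℝ :=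
  Matrix.det !![pdr (wedgeMap ν 0) r s t, pds (wedgeMap ν 0) r s t, pdt (wedgeMap ν 0) r s t;
                pdr (wedgeMap ν 1) r s t, pds (wedgeMap ν 1) r s t, pdt (wedgeMap ν 1) r s t;
                pdr (wedgeMap ν 2) r s t, pds (wedgeMap ν 2) r s t, pdt (wedgeMap ν 2) r s t]

/-- partial derivatives of a two-variable scalar function -/
def pdq (f : ℝ → ℝ → ℝ) (q t : ℝ) : ℝ := deriv (fun x => f x t) q
def pdt2 (f : ℝ → ℝ → ℝ) (q t : ℝ) : ℝ := deriv (fun x => f q x) t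

/-- cross product in ℝ³ -/
def cross3 (u v : Fin 3 → ℝ) : Fin 3 → ℝ :=
  ![u 1 * v 2 - u 2 * v 1, u 2 * v 0 - u 0 * v 2, u 0 * v 1 - u 1 * v 0]

/-- Parameterization of a quadrilateral face of the wedge: the image of the edge of the
reference triangle from vertex (r₀,s₀) to (r₁,s₁), extruded in t. -/
def facePar (ν : Fin 6 → Fin 3 → ℝ) (r₀ s₀ r₁ s₁ : ℝ) (i : Fin 3) (q t : ℝ) : ℝ :=
  wedgeMap ν i ((1 - q) * r₀ + q * r₁) ((1 - q) * s₀ + q * s₁) t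

/-- Cross product of the two tangent vectors of the face parameterization. -/
def faceNormal (ν : Fin 6 → Fin 3 → ℝ) (r₀ s₀ r₁ s₁ : ℝ) (q t : ℝ) : Fin 3 → ℝ :=
  cross3 (fun i => pdq (facePar ν r₀ s₀ r₁ s₁ i) q t)
         (fun i => pdt2 (facePar ν r₀ s₀ r₁ s₁ i) q t)

/-- Surface Jacobian J_f: the magnitude of the cross product of the tangents. -/
def faceJac (ν : Fin 6 → Fin 3 → ℝ) (r₀ s₀ r₁ s₁ : ℝ) (q t : ℝ) : ℝ :=
  Real.sqrt (∑ i : Fin 3, (faceNormal ν r₀ s₀ r₁ s₁ q t i) ^ 2)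

/-- derivative of an affine function -/
lemma deriv_affine (a b x : ℝ) : deriv (fun y => a + b * y) x = b := by
  simpa using (((hasDerivAt_id x).const_mul b).const_add a).deriv

lemma pdq_of_bilin (f : ℝ → ℝ → ℝ) (a b c d : ℝ)
    (h : ∀ q t, f q t = a + b*q + c*t + d*(q*t)) (q t : ℝ) :
    pdq f q t = b + d*t := by
  have hf : (fun x => f x t) = fun x => (a + c*t) + (b + d*t)*x := by
    funext x; rw [h]; ring
  rw [pdq, hf, deriv_affine]

lemma pdt2_of_bilin (f : ℝ → ℝ → ℝ) (a b c d : ℝ)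
    (h : ∀ q t, f q t = a + b*q + c*t + d*(q*t)) (q t : ℝ) :
    pdt2 f q t = c + d*q := by
  have hf : (fun x => f q x) = fun x => (a + b*q) + (c + d*q)*x := by
    funext x; rw [h]; ring
  rw [pdt2, hf, deriv_affine]

lemma pdr_of_tri (f : ℝ → ℝ → ℝ → ℝ) (A B C D E F : ℝ)
    (h : ∀ r s t, f r s t = A + B*r + C*s + D*t + E*(r*t) + F*(s*t)) (r s t : ℝ) :
    pdr f r s t = B + E*t := by
  have hf : (fun x => f x s t) = fun x => (A + C*s + D*t + F*(s*t)) + (B + E*t)*x := by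
    funext x; rw [h]; ring
  rw [pdr, hf, deriv_affine]

lemma pds_of_tri (f : ℝ → ℝ → ℝ → ℝ) (A B C D E F : ℝ)
    (h : ∀ r s t, f r s t = A + B*r + C*s + D*t + E*(r*t) + F*(s*t)) (r s t : ℝ) :
    pds f r s t = C + F*t := by
  have hf : (fun x => f r x t) = fun x => (A + B*r + D*t + E*(r*t)) + (C + F*t)*x := by
    funext x; rw [h]; ring
  rw [pds, hf, deriv_affine]

lemma pdt_of_tri (f : ℝ → ℝ → ℝ → ℝ) (A B C D E F : ℝ)
    (h : ∀ r s t, f r s t = A + B*r + C*s + D*t + E*(r*t) + F*(s*t)) (r s t : ℝ) :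
    pdt f r s t = D + E*r + F*s := by
  have hf : (fun x => f r s x) = fun x => (A + B*r + C*s) + (D + E*r + F*s)*x := by
    funext x; rw [h]; ring
  rw [pdt, hf, deriv_affine]

lemma wedgeMap_tri (ν : Fin 6 → Fin 3 → ℝ) (i : Fin 3) (r s t : ℝ) :
    wedgeMap ν i r s t =
      ν 0 i + (ν 1 i - ν 0 i)*r + (ν 2 i - ν 0 i)*s + (ν 3 i - ν 0 i)*t
      + ((ν 4 i - ν 1 i) - (ν 3 i - ν 0 i))*(r*t) + ((ν 5 i - ν 2 i) - (ν 3 i - ν 0 i))*(s*t) := by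
  simp [wedgeMap, wv, Fin.sum_univ_six]; ring

/-- coefficients of the bilinear face parameterization -/
def Pc (ν : Fin 6 → Fin 3 → ℝ) (r₀ s₀ r₁ s₁ : ℝ) (i : Fin 3) : ℝ :=
  ν 0 i*(1-r₀-s₀) + ν 1 i*r₀ + ν 2 i*s₀
def Qc (ν : Fin 6 → Fin 3 → ℝ) (r₀ s₀ r₁ s₁ : ℝ) (i : Fin 3) : ℝ :=
  ν 0 i*((1-r₁-s₁)-(1-r₀-s₀)) + ν 1 i*(r₁-r₀) + ν 2 i*(s₁-s₀)
def Rc (ν : Fin 6 → Fin 3 → ℝ) (r₀ s₀ r₁ s₁ : ℝ) (i : Fin 3) : ℝ :=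
  (ν 3 i - ν 0 i)*(1-r₀-s₀) + (ν 4 i - ν 1 i)*r₀ + (ν 5 i - ν 2 i)*s₀
def Sc (ν : Fin 6 → Fin 3 → ℝ) (r₀ s₀ r₁ s₁ : ℝ) (i : Fin 3) : ℝ :=
  (ν 3 i - ν 0 i)*((1-r₁-s₁)-(1-r₀-s₀)) + (ν 4 i - ν 1 i)*(r₁-r₀) + (ν 5 i - ν 2 i)*(s₁-s₀)

lemma facePar_bilin (ν : Fin 6 → Fin 3 → ℝ) (r₀ s₀ r₁ s₁ : ℝ) (i : Fin 3) (q t : ℝ) :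
    facePar ν r₀ s₀ r₁ s₁ i q t =
      Pc ν r₀ s₀ r₁ s₁ i + Qc ν r₀ s₀ r₁ s₁ i * q + Rc ν r₀ s₀ r₁ s₁ i * t
      + Sc ν r₀ s₀ r₁ s₁ i * (q*t) := by
  rw [facePar, wedgeMap_tri, Pc, Qc, Rc, Sc]; ring

lemma pdr_wedgeMap (ν : Fin 6 → Fin 3 → ℝ) (i : Fin 3) (r s t : ℝ) :
    pdr (wedgeMap ν i) r s t = (ν 1 i - ν 0 i) + ((ν 4 i - ν 1 i) - (ν 3 i - ν 0 i))*t :=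
  pdr_of_tri _ _ _ _ _ _ _ (wedgeMap_tri ν i) r s t

lemma pds_wedgeMap (ν : Fin 6 → Fin 3 → ℝ) (i : Fin 3) (r s t : ℝ) :
    pds (wedgeMap ν i) r s t = (ν 2 i - ν 0 i) + ((ν 5 i - ν 2 i) - (ν 3 i - ν 0 i))*t :=
  pds_of_tri _ _ _ _ _ _ _ (wedgeMap_tri ν i) r s t

lemma pdt_wedgeMap (ν : Fin 6 → Fin 3 → ℝ) (i : Fin 3) (r s t : ℝ) :
    pdt (wedgeMap ν i) r s t = (ν 3 i - ν 0 i) + ((ν 4 i - ν 1 i) - (ν 3 i - ν 0 i))*r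
      + ((ν 5 i - ν 2 i) - (ν 3 i - ν 0 i))*s :=
  pdt_of_tri _ _ _ _ _ _ _ (wedgeMap_tri ν i) r s t

set_option maxHeartbeats 1000000 in
lemma wedgeJac_eq (ν : Fin 6 → Fin 3 → ℝ) (hν : VerticallyMapped ν) (r s t : ℝ) :
    wedgeJac ν r s t =
      ((ν 1 0 - ν 0 0)*(ν 2 1 - ν 0 1) - (ν 1 1 - ν 0 1)*(ν 2 0 - ν 0 0)) *
        ((ν 3 2 - ν 0 2)*(1-r-s) + (ν 4 2 - ν 1 2)*r + (ν 5 2 - ν 2 2)*s) := by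
  obtain ⟨⟨h30,h31⟩,⟨h40,h41⟩,⟨h50,h51⟩⟩ := hν
  simp only [wedgeJac, pdr_wedgeMap, pds_wedgeMap, pdt_wedgeMap]
  simp [Matrix.det_fin_three]
  rw [h30, h31, h40, h41, h50, h51]; ring


lemma RS_xy_zero (ν : Fin 6 → Fin 3 → ℝ) (hν : VerticallyMapped ν) (r₀ s₀ r₁ s₁ : ℝ) :
    Rc ν r₀ s₀ r₁ s₁ 0 = 0 ∧ Rc ν r₀ s₀ r₁ s₁ 1 = 0 ∧
    Sc ν r₀ s₀ r₁ s₁ 0 = 0 ∧ Sc ν r₀ s₀ r₁ s₁ 1 = 0 := by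
  obtain ⟨⟨h30,h31⟩,⟨h40,h41⟩,⟨h50,h51⟩⟩ := hν
  refine ⟨?_, ?_, ?_, ?_⟩ <;> simp only [Rc, Sc] <;> simp only [h30, h31, h40, h41, h50, h51] <;> ring

lemma faceNormal_eq (ν : Fin 6 → Fin 3 → ℝ) (hν : VerticallyMapped ν) (r₀ s₀ r₁ s₁ q t : ℝ) :
    faceNormal ν r₀ s₀ r₁ s₁ q t =
      (Rc ν r₀ s₀ r₁ s₁ 2 + Sc ν r₀ s₀ r₁ s₁ 2 * q) •
        ![Qc ν r₀ s₀ r₁ s₁ 1, -Qc ν r₀ s₀ r₁ s₁ 0, 0] := by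
  obtain ⟨hR0, hR1, hS0, hS1⟩ := RS_xy_zero ν hν r₀ s₀ r₁ s₁
  have hu : ∀ i, pdq (facePar ν r₀ s₀ r₁ s₁ i) q t
      = Qc ν r₀ s₀ r₁ s₁ i + Sc ν r₀ s₀ r₁ s₁ i * t :=
    fun i => pdq_of_bilin _ _ _ _ _ (facePar_bilin ν r₀ s₀ r₁ s₁ i) q t
  have hv : ∀ i, pdt2 (facePar ν r₀ s₀ r₁ s₁ i) q t
      = Rc ν r₀ s₀ r₁ s₁ i + Sc ν r₀ s₀ r₁ s₁ i * q :=
    fun i => pdt2_of_bilin _ _ _ _ _ (facePar_bilin ν r₀ s₀ r₁ s₁ i) q t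
  funext i
  fin_cases i <;>
    simp [faceNormal, cross3, hu, hv, hR0, hR1, hS0, hS1] <;> ring

lemma facePlane (ν : Fin 6 → Fin 3 → ℝ) (hν : VerticallyMapped ν) (r₀ s₀ r₁ s₁ q t : ℝ) :
    ∑ i : Fin 3, (![Qc ν r₀ s₀ r₁ s₁ 1, -Qc ν r₀ s₀ r₁ s₁ 0, 0] : Fin 3 → ℝ) i *
        facePar ν r₀ s₀ r₁ s₁ i q t
      = Qc ν r₀ s₀ r₁ s₁ 1 * Pc ν r₀ s₀ r₁ s₁ 0 - Qc ν r₀ s₀ r₁ s₁ 0 * Pc ν r₀ s₀ r₁ s₁ 1 := by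
  obtain ⟨hR0, hR1, hS0, hS1⟩ := RS_xy_zero ν hν r₀ s₀ r₁ s₁
  rw [Fin.sum_univ_three]
  simp only [Matrix.cons_val_zero, Matrix.cons_val_one, Matrix.head_cons, Matrix.cons_val_two,
    Matrix.tail_cons]
  rw [facePar_bilin, facePar_bilin, facePar_bilin, hR0, hR1, hS0, hS1]; ring

lemma faceJac_eq (ν : Fin 6 → Fin 3 → ℝ) (hν : VerticallyMapped ν) (r₀ s₀ r₁ s₁ q t : ℝ) :
    faceJac ν r₀ s₀ r₁ s₁ q t =
      |Rc ν r₀ s₀ r₁ s₁ 2 + Sc ν r₀ s₀ r₁ s₁ 2 * q| *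
        Real.sqrt (Qc ν r₀ s₀ r₁ s₁ 1 ^ 2 + Qc ν r₀ s₀ r₁ s₁ 0 ^ 2) := by
  rw [faceJac, faceNormal_eq ν hν, Fin.sum_univ_three]
  have e : ((Rc ν r₀ s₀ r₁ s₁ 2 + Sc ν r₀ s₀ r₁ s₁ 2 * q) •
        (![Qc ν r₀ s₀ r₁ s₁ 1, -Qc ν r₀ s₀ r₁ s₁ 0, 0] : Fin 3 → ℝ)) 0 ^ 2 +
      ((Rc ν r₀ s₀ r₁ s₁ 2 + Sc ν r₀ s₀ r₁ s₁ 2 * q) •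
        (![Qc ν r₀ s₀ r₁ s₁ 1, -Qc ν r₀ s₀ r₁ s₁ 0, 0] : Fin 3 → ℝ)) 1 ^ 2 +
      ((Rc ν r₀ s₀ r₁ s₁ 2 + Sc ν r₀ s₀ r₁ s₁ 2 * q) •
        (![Qc ν r₀ s₀ r₁ s₁ 1, -Qc ν r₀ s₀ r₁ s₁ 0, 0] : Fin 3 → ℝ)) 2 ^ 2
      = (Rc ν r₀ s₀ r₁ s₁ 2 + Sc ν r₀ s₀ r₁ s₁ 2 * q) ^ 2 *
        (Qc ν r₀ s₀ r₁ s₁ 1 ^ 2 + Qc ν r₀ s₀ r₁ s₁ 0 ^ 2) := by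
    simp only [Pi.smul_apply, smul_eq_mul, Matrix.cons_val_zero, Matrix.cons_val_one,
      Matrix.head_cons, Matrix.cons_val_two, Matrix.tail_cons]
    ring
  rw [e, Real.sqrt_mul (sq_nonneg _), Real.sqrt_sq_eq_abs]

/-- For a vertically mapped wedge (with nondegenerate mapping, J > 0 on
the reference wedge), each quadrilateral face — the image of an edge of the reference
triangle (r=0, s=0 or r+s=1), extruded in t — is planar with constant unit normal, and
its surface Jacobian J_f is constant in the extruded coordinate t and varies at most
linearly (affinely) in the horizontal face coordinate q. -/
theorem stmt19 (ν : Fin 6 → Fin 3 → ℝ) (hν : VerticallyMapped ν)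
    (hJ : ∀ r s t : ℝ, 0 ≤ r → 0 ≤ s → r + s ≤ 1 → 0 ≤ t → t ≤ 1 →
      0 < wedgeJac ν r s t)
    (r₀ s₀ r₁ s₁ : ℝ)
    (hedge : ((r₀, s₀) = ((0 : ℝ), (0 : ℝ)) ∨ (r₀, s₀) = (1, 0) ∨ (r₀, s₀) = (0, 1)) ∧
             ((r₁, s₁) = ((0 : ℝ), (0 : ℝ)) ∨ (r₁, s₁) = (1, 0) ∨ (r₁, s₁) = (0, 1)) ∧
             (r₀, s₀) ≠ (r₁, s₁)) :
    -- the face is planar with a constant (unit-direction) normal: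
    (∃ nv : Fin 3 → ℝ, nv ≠ 0 ∧
      (∀ q t, q ∈ Set.Icc (0 : ℝ) 1 → t ∈ Set.Icc (0 : ℝ) 1 →
        ∃ c : ℝ, faceNormal ν r₀ s₀ r₁ s₁ q t = c • nv) ∧
      (∃ d : ℝ, ∀ q t, q ∈ Set.Icc (0 : ℝ) 1 → t ∈ Set.Icc (0 : ℝ) 1 →
        ∑ i : Fin 3, nv i * facePar ν r₀ s₀ r₁ s₁ i q t = d)) ∧
    -- J_f is constant in t:
    (∀ q t t', q ∈ Set.Icc (0 : ℝ) 1 → t ∈ Set.Icc (0 : ℝ) 1 → t' ∈ Set.Icc (0 : ℝ) 1 →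
      faceJac ν r₀ s₀ r₁ s₁ q t = faceJac ν r₀ s₀ r₁ s₁ q t') ∧
    -- J_f is affine in the horizontal face coordinate q:
    (∃ a b : ℝ, ∀ q t, q ∈ Set.Icc (0 : ℝ) 1 → t ∈ Set.Icc (0 : ℝ) 1 →
      faceJac ν r₀ s₀ r₁ s₁ q t = a + b * q) := by
  obtain ⟨he0, he1, hne⟩ := hedge
  -- endpoints lie in the reference triangle
  have hm0 : 0 ≤ r₀ ∧ 0 ≤ s₀ ∧ r₀ + s₀ ≤ 1 := by
    rcases he0 with h | h | h <;>
      (rw [Prod.mk.injEq] at h; obtain ⟨h1, h2⟩ := h; subst h1; subst h2; norm_num)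
  have hm1 : 0 ≤ r₁ ∧ 0 ≤ s₁ ∧ r₁ + s₁ ≤ 1 := by
    rcases he1 with h | h | h <;>
      (rw [Prod.mk.injEq] at h; obtain ⟨h1, h2⟩ := h; subst h1; subst h2; norm_num)
  -- sign information from the Jacobian
  have hJ0 : 0 < ((ν 1 0 - ν 0 0)*(ν 2 1 - ν 0 1) - (ν 1 1 - ν 0 1)*(ν 2 0 - ν 0 0)) *
      Rc ν r₀ s₀ r₁ s₁ 2 := by
    have h := hJ r₀ s₀ 0 hm0.1 hm0.2.1 hm0.2.2 le_rfl zero_le_one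
    rw [wedgeJac_eq ν hν] at h
    have e : (ν 3 2 - ν 0 2)*(1-r₀-s₀) + (ν 4 2 - ν 1 2)*r₀ + (ν 5 2 - ν 2 2)*s₀
        = Rc ν r₀ s₀ r₁ s₁ 2 := by rw [Rc]
    rwa [e] at h
  have hJ1 : 0 < ((ν 1 0 - ν 0 0)*(ν 2 1 - ν 0 1) - (ν 1 1 - ν 0 1)*(ν 2 0 - ν 0 0)) *
      (Rc ν r₀ s₀ r₁ s₁ 2 + Sc ν r₀ s₀ r₁ s₁ 2) := by
    have h := hJ r₁ s₁ 0 hm1.1 hm1.2.1 hm1.2.2 le_rfl zero_le_one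
    rw [wedgeJac_eq ν hν] at h
    have e : (ν 3 2 - ν 0 2)*(1-r₁-s₁) + (ν 4 2 - ν 1 2)*r₁ + (ν 5 2 - ν 2 2)*s₁
        = Rc ν r₀ s₀ r₁ s₁ 2 + Sc ν r₀ s₀ r₁ s₁ 2 := by rw [Rc, Sc]; ring
    rwa [e] at h
  have hDne : ((ν 1 0 - ν 0 0)*(ν 2 1 - ν 0 1) - (ν 1 1 - ν 0 1)*(ν 2 0 - ν 0 0)) ≠ 0 := by
    intro h
    rw [h, zero_mul] at hJ0
    exact lt_irrefl 0 hJ0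
  -- the horizontal edge vector is nonzero
  have hds : r₁ - r₀ ≠ 0 ∨ s₁ - s₀ ≠ 0 := by
    by_contra h
    push_neg at h
    exact hne (Prod.ext (by linarith [h.1] : r₀ = r₁) (by linarith [h.2] : s₀ = s₁))
  have hQne : ¬ (Qc ν r₀ s₀ r₁ s₁ 0 = 0 ∧ Qc ν r₀ s₀ r₁ s₁ 1 = 0) := by
    rintro ⟨hq0, hq1⟩
    rw [Qc] at hq0 hq1
    have e0 : (ν 1 0 - ν 0 0)*(r₁-r₀) + (ν 2 0 - ν 0 0)*(s₁-s₀) = 0 := by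
      linear_combination hq0
    have e1 : (ν 1 1 - ν 0 1)*(r₁-r₀) + (ν 2 1 - ν 0 1)*(s₁-s₀) = 0 := by
      linear_combination hq1
    have hdr0 : ((ν 1 0 - ν 0 0)*(ν 2 1 - ν 0 1) - (ν 1 1 - ν 0 1)*(ν 2 0 - ν 0 0)) * (r₁-r₀)
        = 0 := by linear_combination (ν 2 1 - ν 0 1)*e0 - (ν 2 0 - ν 0 0)*e1
    have hds0 : ((ν 1 0 - ν 0 0)*(ν 2 1 - ν 0 1) - (ν 1 1 - ν 0 1)*(ν 2 0 - ν 0 0)) * (s₁-s₀)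
        = 0 := by linear_combination (ν 1 0 - ν 0 0)*e1 - (ν 1 1 - ν 0 1)*e0
    rcases hds with h | h
    · exact h ((mul_eq_zero.mp hdr0).resolve_left hDne)
    · exact h ((mul_eq_zero.mp hds0).resolve_left hDne)
  have hnv : (![Qc ν r₀ s₀ r₁ s₁ 1, -Qc ν r₀ s₀ r₁ s₁ 0, 0] : Fin 3 → ℝ) ≠ 0 := by
    intro h
    have h0 := congrFun h 0
    have h1 := congrFun h 1
    simp at h0 h1
    exact hQne ⟨h1, h0⟩
  refine ⟨⟨![Qc ν r₀ s₀ r₁ s₁ 1, -Qc ν r₀ s₀ r₁ s₁ 0, 0], hnv, ?_, ?_⟩, ?_, ?_⟩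
  · intro q t _ _
    exact ⟨Rc ν r₀ s₀ r₁ s₁ 2 + Sc ν r₀ s₀ r₁ s₁ 2 * q, faceNormal_eq ν hν r₀ s₀ r₁ s₁ q t⟩
  · exact ⟨Qc ν r₀ s₀ r₁ s₁ 1 * Pc ν r₀ s₀ r₁ s₁ 0 - Qc ν r₀ s₀ r₁ s₁ 0 * Pc ν r₀ s₀ r₁ s₁ 1,
      fun q t _ _ => facePlane ν hν r₀ s₀ r₁ s₁ q t⟩
  · intro q t t' _ _ _
    rw [faceJac_eq ν hν, faceJac_eq ν hν]
  · -- affine in q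
    rcases lt_or_gt_of_ne hDne with hD | hD
    · -- D < 0 : the vertical stretches are negative
      have hR2 : Rc ν r₀ s₀ r₁ s₁ 2 < 0 := by nlinarith
      have hRS2 : Rc ν r₀ s₀ r₁ s₁ 2 + Sc ν r₀ s₀ r₁ s₁ 2 < 0 := by nlinarith
      refine ⟨-Rc ν r₀ s₀ r₁ s₁ 2 * Real.sqrt (Qc ν r₀ s₀ r₁ s₁ 1 ^ 2 + Qc ν r₀ s₀ r₁ s₁ 0 ^ 2),
        -Sc ν r₀ s₀ r₁ s₁ 2 * Real.sqrt (Qc ν r₀ s₀ r₁ s₁ 1 ^ 2 + Qc ν r₀ s₀ r₁ s₁ 0 ^ 2),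
        ?_⟩
      intro q t hq _
      obtain ⟨hq0, hq1⟩ := Set.mem_Icc.mp hq
      have hw : Rc ν r₀ s₀ r₁ s₁ 2 + Sc ν r₀ s₀ r₁ s₁ 2 * q ≤ 0 := by
        nlinarith [mul_nonneg (by linarith : (0:ℝ) ≤ 1 - q) (le_of_lt (neg_pos.mpr hR2)),
          mul_nonneg hq0 (le_of_lt (neg_pos.mpr hRS2))]
      rw [faceJac_eq ν hν, abs_of_nonpos hw]
      ring
    · -- D > 0
      have hR2 : 0 < Rc ν r₀ s₀ r₁ s₁ 2 := by nlinarith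
      have hRS2 : 0 < Rc ν r₀ s₀ r₁ s₁ 2 + Sc ν r₀ s₀ r₁ s₁ 2 := by nlinarith
      refine ⟨Rc ν r₀ s₀ r₁ s₁ 2 * Real.sqrt (Qc ν r₀ s₀ r₁ s₁ 1 ^ 2 + Qc ν r₀ s₀ r₁ s₁ 0 ^ 2),
        Sc ν r₀ s₀ r₁ s₁ 2 * Real.sqrt (Qc ν r₀ s₀ r₁ s₁ 1 ^ 2 + Qc ν r₀ s₀ r₁ s₁ 0 ^ 2),
        ?_⟩
      intro q t hq _
      obtain ⟨hq0, hq1⟩ := Set.mem_Icc.mp hq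
      have hw : 0 ≤ Rc ν r₀ s₀ r₁ s₁ 2 + Sc ν r₀ s₀ r₁ s₁ 2 * q := by
        nlinarith [mul_nonneg (by linarith : (0:ℝ) ≤ 1 - q) hR2.le, mul_nonneg hq0 hRS2.le]
      rw [faceJac_eq ν hν, abs_of_nonneg hw]
      ring
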